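/- arXiv:2405.03625 — 4 statements merged into one kernel-verified Lean document; each statement's English description precedes it below -/
import Mathlib

section
/- For any fixed base b > 1 and any digit block w of length p ≥ 1, and any k ≥ 0, the number N_w(k,l) of strings of length l over the alphabet {0,...,b-1} containing exactly k (possibly overlapping) occurrences of w satisfies N_w(k,l) ≤ b^l (trivially), and moreover the sum over 0 ≤ j ≤ k of Σ_l N_w(j,l) b^{-l} is at most p(k+1)b^p. -/
/-
Cut a string of length `l` into its `m = l / p` aligned blocks of length `p` and a remainder.
Distinct aligned blocks equal to `w` are distinct occurrences of `w`, so a string with at most `k`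
occurrences has at most `k` such blocks, and there are at most
`∑_{i ≤ k} C(m, i) (b ^ p - 1) ^ (m - i) b ^ (l % p)` of them. With `B = b ^ p` their mass is
`∑_{i ≤ k} C(m, i) (B - 1) ^ (m - i) / B ^ m`, and by the negative binomial series
`∑_n C(n + i, i) x ^ n = (1 - x) ^ (-(i + 1))` at `x = 1 - 1 / B` each summand sums over `m` to `B`.
Every `m` comes from `p` lengths `l`, which gives the bound `p (k + 1) B`.
-/

open scoped BigOperators

/-- Number of (possibly overlapping) occurrences of the block `w` as a contiguous
substring of `X`. -/
def occCount {α : Type*} [DecidableEq α] (w X : List α) : ℕ :=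
  ((List.range X.length).filter fun i => (X.drop i).take w.length = w).length

/-- `Nw b w k l`: the number of strings of length `l` over `{0,…,b-1}` containing
exactly `k` occurrences of `w`. -/
def Nw (b : ℕ) (w : List (Fin b)) (k l : ℕ) : ℕ :=
  Fintype.card {f : Fin l → Fin b // occCount w (List.ofFn f) = k}

open Finset

lemma card_filter_le_eq_sum_card_filter_eq {α : Type*} [Fintype α] (c : α → ℕ) (k : ℕ) :
    #{x | c x ≤ k} = ∑ j ∈ range (k + 1), #{x | c x = j} := by
  rw [card_eq_sum_card_fiberwise (f := c) (t := range (k + 1))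
    fun x hx => by simpa [Nat.lt_succ_iff] using hx]
  refine sum_congr rfl fun j hj => congrArg card ?_
  ext x
  simp only [mem_filter, mem_univ, true_and, and_iff_right_iff_imp]
  rintro rfl
  simpa [Nat.lt_succ_iff] using hj

section FunctionsWithPrescribedValue

variable {ι β : Type*} [Fintype ι] [DecidableEq ι] [Fintype β] [DecidableEq β]

lemma card_filter_preimage_singleton_eq (a : β) (s : Finset ι) :
    #{v : ι → β | ({i | v i = a} : Finset ι) = s}
      = (Fintype.card β - 1) ^ (Fintype.card ι - #s) := by
  have hpi : ({v : ι → β | ({i | v i = a} : Finset ι) = s} : Finset (ι → β))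
      = Fintype.piFinset fun i => if i ∈ s then {a} else {a}ᶜ := by
    ext v
    simp only [mem_filter, mem_univ, true_and, Fintype.mem_piFinset, Finset.ext_iff]
    refine forall_congr' fun i => ?_
    split_ifs with hi <;> simp [hi]
  simp only [hpi, Fintype.card_piFinset, apply_ite card, card_singleton, card_compl, prod_ite,
    prod_const_one, one_mul, prod_const]
  rw [filter_not, card_sdiff_of_subset (filter_subset _ _)]
  simp

lemma card_filter_card_preimage_singleton_eq (a : β) (j : ℕ) :
    #{v : ι → β | #{i | v i = a} = j}
      = (Fintype.card ι).choose j * (Fintype.card β - 1) ^ (Fintype.card ι - j) := by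
  rw [card_eq_sum_card_fiberwise (f := fun v : ι → β => ({i | v i = a} : Finset ι))
    (t := powersetCard j univ) fun v hv => by simpa using hv]
  rw [sum_congr rfl fun s hs => ?_, sum_const, card_powersetCard, card_univ, smul_eq_mul]
  rw [← (mem_powersetCard.1 hs).2, ← card_filter_preimage_singleton_eq a s, filter_filter]
  congr 1
  ext v
  simp only [mem_filter, mem_univ, true_and, and_iff_right_iff_imp]
  rintro rfl
  rfl

end FunctionsWithPrescribedValue

namespace Nat

lemma add_one_mul_le_of_lt_div {i p l : ℕ} (hi : i < l / p) : (i + 1) * p ≤ l :=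
  (Nat.mul_le_mul_right p hi).trans (Nat.div_mul_le_self l p)

lemma pos_of_lt_div {i p l : ℕ} (hi : i < l / p) : 0 < p :=
  Nat.pos_of_ne_zero fun h => by simp [h] at hi

lemma mul_add_lt_of_lt_div {i j p l : ℕ} (hi : i < l / p) (hj : j < p) : i * p + j < l := by
  have := add_one_mul_le_of_lt_div hi
  rw [Nat.succ_mul] at this
  omega

end Nat

def blockEquiv (α : Type*) (p l : ℕ) :
    (Fin l → α) ≃ (Fin (l / p) → Fin p → α) × (Fin (l % p) → α) :=
  ((((Equiv.sumCongr finProdFinEquiv (Equiv.refl _)).trans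
    (finSumFinEquiv.trans (finCongr (Nat.div_add_mod' l p)))).arrowCongr (Equiv.refl α)).symm.trans
    (Equiv.sumArrowEquivProdArrow _ _ _)).trans ((Equiv.curry _ _ _).prodCongr (Equiv.refl _))

section Blocks

variable {α : Type*} {p l : ℕ}

lemma blockEquiv_fst_apply (f : Fin l → α) (i : Fin (l / p)) (j : Fin p) :
    (blockEquiv α p l f).1 i j = f ⟨i * p + j, Nat.mul_add_lt_of_lt_div i.2 j.2⟩ := by
  simp [blockEquiv, finProdFinEquiv, add_comm, mul_comm]

lemma ofFn_blockEquiv_fst (f : Fin l → α) (i : Fin (l / p)) :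
    List.ofFn ((blockEquiv α p l f).1 i) = ((List.ofFn f).drop (i * p)).take p := by
  apply List.ext_getElem
  · have := Nat.add_one_mul_le_of_lt_div i.2
    rw [Nat.succ_mul] at this
    simp only [List.length_ofFn, List.length_take, List.length_drop, left_eq_inf]
    omega
  · intro n h1 h2
    simp [blockEquiv_fst_apply]

lemma card_filter_blockEquiv_fst_mem [Fintype α] [DecidableEq α]
    (S : Finset (Fin (l / p) → Fin p → α)) :
    #{f | (blockEquiv α p l f).1 ∈ S} = #S * Fintype.card α ^ (l % p) := by
  rw [card_equiv (blockEquiv α p l) (t := S ×ˢ univ) (by simp), card_product]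
  simp

lemma card_filter_blockEquiv_fst_eq_le_occCount [DecidableEq α] (w : List α) (f : Fin l → α) :
    #{i | (blockEquiv α w.length l f).1 i = w.get} ≤ occCount w (List.ofFn f) := by
  have hocc : occCount w (List.ofFn f)
      = #{n ∈ range l | ((List.ofFn f).drop n).take w.length = w} := by
    simp only [occCount, List.length_ofFn]
    rfl
  rw [hocc]
  refine card_le_card_of_injOn (fun i => i * w.length) (fun i hi => ?_) fun i _ j _ hij => ?_
  · simp only [coe_filter, mem_univ, true_and, Set.mem_ofPred_eq] at hi
    simp only [coe_filter, mem_range, Set.mem_ofPred_eq]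
    refine ⟨Nat.mul_add_lt_of_lt_div (j := 0) i.2 (Nat.pos_of_lt_div i.2), ?_⟩
    rw [← ofFn_blockEquiv_fst, hi, List.ofFn_get]
  · exact Fin.ext (Nat.eq_of_mul_eq_mul_right (Nat.pos_of_lt_div i.2) hij)

end Blocks

lemma hasSum_choose_mul_pow_sub_div_pow {B : ℝ} (hB : 1 ≤ B) (i : ℕ) :
    HasSum (fun m : ℕ => m.choose i * (B - 1) ^ (m - i) / B ^ m) B := by
  have hB0 : B ≠ 0 := by positivity
  have hr : ‖(B - 1) / B‖ < 1 := by
    rw [Real.norm_eq_abs, abs_of_nonneg (by positivity), div_lt_one (by positivity)]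
    linarith
  have hshift :
      HasSum (fun n : ℕ => (n + i).choose i * (B - 1) ^ (n + i - i) / B ^ (n + i)) B := by
    have hsum : (B ^ i)⁻¹ * (1 / (1 - (B - 1) / B) ^ (i + 1)) = B := by
      rw [one_sub_div hB0, sub_sub_cancel, one_div_pow, one_div_one_div, pow_succ,
        inv_mul_cancel_left₀ (pow_ne_zero i hB0)]
    have h := (hasSum_choose_mul_geometric_of_norm_lt_one i hr).mul_left (B ^ i)⁻¹
    rw [hsum] at h
    refine h.congr_fun fun n => ?_
    rw [Nat.add_sub_cancel, pow_add, div_pow]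
    field_simp
  rw [← hasSum_nat_add_iff' i, sum_eq_zero fun m hm => ?_, sub_zero]
  · exact hshift
  · rw [Nat.choose_eq_zero_of_lt (mem_range.1 hm)]
    simp

lemma HasSum.comp_nat_div {g : ℕ → ℝ} {s : ℝ} (hg : HasSum g s) (p : ℕ) [NeZero p] :
    HasSum (fun l => g (l / p)) (p * s) := by
  have hone : HasSum (fun _ : Fin p => (1 : ℝ)) p := by
    simpa using hasSum_fintype fun _ : Fin p => (1 : ℝ)
  have hprod := hg.mul hone (summable_mul_of_summable_norm hg.summable.norm hone.summable.norm)
  simp only [mul_one] at hprod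
  rw [mul_comm, ← (Nat.divModEquiv p).hasSum_iff] at hprod
  exact hprod

-- For `B = b ^ p`: the mass of the strings of each length `l` with `l / p = m` and at most `k`
-- of their `m` aligned blocks equal to `w`.
noncomputable def blockMass (B : ℝ) (k m : ℕ) : ℝ :=
  ∑ i ∈ range (k + 1), m.choose i * (B - 1) ^ (m - i) / B ^ m

lemma hasSum_blockMass {B : ℝ} (hB : 1 ≤ B) (k : ℕ) : HasSum (blockMass B k) ((k + 1) * B) := by
  rw [show ((k : ℝ) + 1) * B = ∑ _ ∈ range (k + 1), B by simp]
  exact hasSum_sum fun i _ => hasSum_choose_mul_pow_sub_div_pow hB i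

section Nw

variable {b : ℕ} (w : List (Fin b))

lemma Nw_le_pow (k l : ℕ) : Nw b w k l ≤ b ^ l :=
  (Fintype.card_subtype_le _).trans (by simp)

lemma sum_Nw_eq_card (k l : ℕ) :
    ∑ j ∈ range (k + 1), Nw b w j l = #{f : Fin l → Fin b | occCount w (List.ofFn f) ≤ k} := by
  simp only [card_filter_le_eq_sum_card_filter_eq, Nw, Fintype.card_subtype]

lemma sum_Nw_le (k l : ℕ) :
    ∑ j ∈ range (k + 1), Nw b w j l ≤
      (∑ i ∈ range (k + 1), (l / w.length).choose i * (b ^ w.length - 1) ^ (l / w.length - i))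
        * b ^ (l % w.length) := by
  calc ∑ j ∈ range (k + 1), Nw b w j l
      = #{f : Fin l → Fin b | occCount w (List.ofFn f) ≤ k} := sum_Nw_eq_card w k l
    _ ≤ #{f | (blockEquiv (Fin b) w.length l f).1 ∈
          ({v | #{i | v i = w.get} ≤ k} : Finset (Fin (l / w.length) → Fin w.length → Fin b))} :=
      card_le_card <| monotone_filter_right _ fun f _ (hf : occCount w (List.ofFn f) ≤ k) => by
        simpa using (card_filter_blockEquiv_fst_eq_le_occCount w f).trans hf
    _ = _ := by
      rw [card_filter_blockEquiv_fst_mem, card_filter_le_eq_sum_card_filter_eq]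
      simp [card_filter_card_preimage_singleton_eq]

lemma sum_Nw_mul_inv_pow_le (hb : 0 < b) (k l : ℕ) :
    ∑ j ∈ range (k + 1), (Nw b w j l : ℝ) * (b : ℝ)⁻¹ ^ l
      ≤ blockMass ((b : ℝ) ^ w.length) k (l / w.length) := by
  have hcast : (∑ j ∈ range (k + 1), (Nw b w j l : ℝ)) ≤
      (∑ i ∈ range (k + 1), ((l / w.length).choose i : ℝ) *
        ((b : ℝ) ^ w.length - 1) ^ (l / w.length - i)) * (b : ℝ) ^ (l % w.length) := by
    have hpow : 1 ≤ b ^ w.length := Nat.one_le_pow _ _ hb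
    exact_mod_cast sum_Nw_le w k l
  have hscale : (b : ℝ) ^ (l % w.length) * (b : ℝ)⁻¹ ^ l
      = (((b : ℝ) ^ w.length) ^ (l / w.length))⁻¹ := by
    have hb0 : (b : ℝ) ≠ 0 := by positivity
    calc (b : ℝ) ^ (l % w.length) * (b : ℝ)⁻¹ ^ l
        = (b : ℝ) ^ (l % w.length) * ((b : ℝ)⁻¹ ^ (l / w.length * w.length)
            * (b : ℝ)⁻¹ ^ (l % w.length)) := by rw [← pow_add, Nat.div_add_mod']
      _ = ((b : ℝ) * (b : ℝ)⁻¹) ^ (l % w.length) * (b : ℝ)⁻¹ ^ (l / w.length * w.length) := by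
        ring
      _ = _ := by rw [mul_inv_cancel₀ hb0, one_pow, one_mul, inv_pow, ← pow_mul, mul_comm]
  calc ∑ j ∈ range (k + 1), (Nw b w j l : ℝ) * (b : ℝ)⁻¹ ^ l
      = (∑ j ∈ range (k + 1), (Nw b w j l : ℝ)) * (b : ℝ)⁻¹ ^ l := (sum_mul ..).symm
    _ ≤ _ := mul_le_mul_of_nonneg_right hcast (by positivity)
    _ = _ := by rw [mul_assoc, hscale, blockMass, ← sum_div, div_eq_mul_inv]

end Nw

theorem stmt0_general (b : ℕ) (w : List (Fin b)) (hw : 1 ≤ w.length) (k : ℕ) :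
    (∀ l, Nw b w k l ≤ b ^ l) ∧
    (∀ j ≤ k, Summable fun l : ℕ => (Nw b w j l : ℝ) * ((b : ℝ)⁻¹) ^ l) ∧
    ∑ j ∈ Finset.range (k + 1), ∑' l : ℕ, (Nw b w j l : ℝ) * ((b : ℝ)⁻¹) ^ l ≤
      (w.length : ℝ) * (k + 1) * (b : ℝ) ^ w.length := by
  have hb : 0 < b := (w.get ⟨0, hw⟩).pos
  have : NeZero w.length := ⟨by omega⟩
  have hB : 1 ≤ (b : ℝ) ^ w.length := one_le_pow₀ (Nat.one_le_cast.2 hb)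
  have hmass := (hasSum_blockMass hB k).comp_nat_div w.length
  have hle := sum_Nw_mul_inv_pow_le w hb k
  have hsummable : ∀ j ∈ range (k + 1), Summable fun l : ℕ => (Nw b w j l : ℝ) * ((b : ℝ)⁻¹) ^ l :=
    fun j hj => hmass.summable.of_nonneg_of_le (fun l => by positivity) fun l =>
      (single_le_sum (f := fun j => (Nw b w j l : ℝ) * ((b : ℝ)⁻¹) ^ l)
        (fun _ _ => by positivity) hj).trans (hle l)
  refine ⟨Nw_le_pow w k, fun j hj => hsummable j (mem_range.2 (Nat.lt_succ_of_le hj)), ?_⟩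
  calc ∑ j ∈ range (k + 1), ∑' l : ℕ, (Nw b w j l : ℝ) * ((b : ℝ)⁻¹) ^ l
      = ∑' l : ℕ, ∑ j ∈ range (k + 1), (Nw b w j l : ℝ) * ((b : ℝ)⁻¹) ^ l :=
        (Summable.tsum_finsetSum hsummable).symm
    _ ≤ ∑' l : ℕ, blockMass ((b : ℝ) ^ w.length) k (l / w.length) :=
        Summable.tsum_le_tsum hle (summable_sum hsummable) hmass.summable
    _ = (w.length : ℝ) * (k + 1) * (b : ℝ) ^ w.length := by rw [hmass.tsum_eq, mul_assoc]

theorem stmt0 (b : ℕ) (hb : 1 < b) (w : List (Fin b)) (hw : 1 ≤ w.length) (k : ℕ) :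
    (∀ l, Nw b w k l ≤ b ^ l) ∧
    (∀ j ≤ k, Summable fun l : ℕ => (Nw b w j l : ℝ) * ((b : ℝ)⁻¹) ^ l) ∧
    ∑ j ∈ Finset.range (k + 1), ∑' l : ℕ, (Nw b w j l : ℝ) * ((b : ℝ)⁻¹) ^ l ≤
      (w.length : ℝ) * (k + 1) * (b : ℝ) ^ w.length :=
  stmt0_general b w hw k
end

section
/- The generating series Z_w(k)(t) = Σ_{l≥0} N_w(k,l) t^l has radius of convergence at least (b^p - 1)^{-1/p}, which is strictly greater than 1/b. -/
open scoped BigOperators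

/-! Cut a string of length `l` into `l / p` aligned blocks of length `p` and a tail of length
`l % p`. An aligned block equal to `w` is an occurrence of `w`, so a string with `k` occurrences
has at most `k` such blocks; choosing their positions and filling the other blocks with the
`b ^ p - 1` words different from `w` gives `N_w(k,l) ≤ (l+k).choose k * (b^p - 1)^(l/p) * b^p`.
Since `∑ (l+k).choose k * y^l` converges for `|y| < 1`, the radius of convergence is at least
`(b^p - 1)^(-1/p)`, and `b^p - 1 < b^p` makes it exceed `1/b`. -/

open Finset

theorem occCount_eq_card_filter_range {α : Type*} [DecidableEq α] (w X : List α) :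
    occCount w X = #{i ∈ range X.length | (X.drop i).take w.length = w} := rfl

theorem mul_add_le_of_lt_div {p l j : ℕ} (hj : j < l / p) : p * j + p ≤ l := by
  calc p * j + p = p * (j + 1) := by ring
    _ ≤ p * (l / p) := Nat.mul_le_mul_left p hj
    _ ≤ l := Nat.mul_div_le l p

theorem pos_of_lt_div {p l j : ℕ} (hj : j < l / p) : 0 < p :=
  Nat.pos_of_ne_zero fun h0 => by simp [h0] at hj

def finBlocksEquiv (p l : ℕ) : Fin l ≃ Fin (l / p) × Fin p ⊕ Fin (l % p) :=
  (finCongr (Nat.div_add_mod' l p).symm).trans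
    (finSumFinEquiv.symm.trans (Equiv.sumCongr finProdFinEquiv.symm (Equiv.refl _)))

@[simp]
theorem finBlocksEquiv_symm_inl_val {p l : ℕ} (j : Fin (l / p)) (t : Fin p) :
    ((finBlocksEquiv p l).symm (Sum.inl (j, t)) : ℕ) = t + p * j := by
  simp [finBlocksEquiv]

def blocksEquiv (β : Type*) (p l : ℕ) :
    (Fin l → β) ≃ (Fin (l / p) → Fin p → β) × (Fin (l % p) → β) :=
  ((finBlocksEquiv p l).arrowCongr (Equiv.refl β)).trans
    ((Equiv.sumArrowEquivProdArrow _ _ _).trans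
      (Equiv.prodCongr (Equiv.curry _ _ _) (Equiv.refl _)))

theorem blocksEquiv_fst_apply {β : Type*} {p l : ℕ} (f : Fin l → β) (j : Fin (l / p))
    (t : Fin p) :
    (blocksEquiv β p l f).1 j t = f ((finBlocksEquiv p l).symm (Sum.inl (j, t))) := rfl

theorem take_drop_ofFn_eq_ofFn_blocksEquiv {β : Type*} {p l : ℕ} (f : Fin l → β)
    (j : Fin (l / p)) :
    ((List.ofFn f).drop (p * j)).take p = List.ofFn ((blocksEquiv β p l f).1 j) := by
  have hjl := mul_add_le_of_lt_div j.2
  apply List.ext_getElem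
  · simp; omega
  · intro n _ _
    simp only [List.getElem_take, List.getElem_drop, List.getElem_ofFn, blocksEquiv_fst_apply]
    congr 1
    ext
    simp [add_comm]

theorem card_filter_blocks_eq_le_occCount {β : Type*} [DecidableEq β] (w : List β) {l : ℕ}
    (f : Fin l → β) :
    #{j | (blocksEquiv β w.length l f).1 j = w.get} ≤ occCount w (List.ofFn f) := by
  rw [occCount_eq_card_filter_range, List.length_ofFn]
  refine card_le_card_of_injOn (fun j => w.length * j) (fun j hj => ?_) fun j _ j' _ h => ?_
  · simp only [coe_filter, mem_univ, true_and, Set.mem_ofPred_eq] at hj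
    simp only [coe_filter, mem_range, Set.mem_ofPred_eq, take_drop_ofFn_eq_ofFn_blocksEquiv, hj,
      List.ofFn_get, and_true]
    have := mul_add_le_of_lt_div j.2
    have := pos_of_lt_div j.2
    omega
  · exact Fin.ext (Nat.eq_of_mul_eq_mul_left (pos_of_lt_div j.2) h)

-- Pad `T` with `k - #T` points of `Fin k` to get a `k`-subset of `ι ⊕ Fin k`.
theorem card_finset_card_le_le_choose (ι : Type*) [Fintype ι] [DecidableEq ι] (k : ℕ) :
    #{T : Finset ι | #T ≤ k} ≤ (Fintype.card ι + k).choose k := by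
  have hcard : #(powersetCard k (univ : Finset (ι ⊕ Fin k))) = (Fintype.card ι + k).choose k := by
    simp [card_powersetCard]
  rw [← hcard]
  refine card_le_card_of_surjOn Finset.toLeft fun T hT => ?_
  have hTk : #T ≤ k := (mem_filter.1 hT).2
  obtain ⟨S, -, hS⟩ := exists_subset_card_eq (s := (univ : Finset (Fin k))) (n := k - #T)
    (by simp)
  exact ⟨T.disjSum S, by simp [card_disjSum, hS, hTk], toLeft_disjSum⟩

theorem card_filter_card_fiber_le {ι α : Type*} [Fintype ι] [DecidableEq ι] [Fintype α]
    [DecidableEq α] [Nontrivial α] (a : α) (k : ℕ) :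
    #{g : ι → α | #{i | g i = a} ≤ k} ≤
      #{T : Finset ι | #T ≤ k} * (Fintype.card α - 1) ^ Fintype.card ι := by
  obtain ⟨a', ha'⟩ := exists_ne a
  have htarget :
      #(({T : Finset ι | #T ≤ k} : Finset _) ×ˢ Fintype.piFinset fun _ : ι => univ.erase a) =
      #{T : Finset ι | #T ≤ k} * (Fintype.card α - 1) ^ Fintype.card ι := by
    simp [card_product, Fintype.card_piFinset, card_erase_of_mem]
  rw [← htarget]
  -- `g` is recovered from its fibre over `a` and from `g` with that fibre overwritten by `a'`.
  refine card_le_card_of_injOn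
    (fun g => (({i | g i = a} : Finset ι), fun i => if g i = a then a' else g i))
    (fun g hg => ?_) fun g _ g' _ h => ?_
  · simp only [coe_filter, mem_univ, true_and, Set.mem_ofPred_eq] at hg
    simp only [mem_coe, mem_product, mem_filter, mem_univ, true_and, Fintype.mem_piFinset,
      mem_erase, and_true]
    exact ⟨hg, fun i => by split_ifs with h <;> assumption⟩
  · simp only [Prod.mk.injEq] at h
    obtain ⟨hT, hrest⟩ := h
    funext i
    have hi := congrFun hrest i
    have hmem : g i = a ↔ g' i = a := by
      simpa using congrArg (i ∈ ·) hT
    by_cases hgi : g i = a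
    · rw [hgi, hmem.1 hgi]
    · simpa [hgi, hmem.not.1 hgi] using hi

theorem Nw_le_card_filter_mul (b : ℕ) (w : List (Fin b)) (k l : ℕ) :
    Nw b w k l ≤ #{g : Fin (l / w.length) → Fin w.length → Fin b | #{j | g j = w.get} ≤ k} *
      b ^ (l % w.length) := by
  rw [Nw, Fintype.card_subtype]
  calc #{f : Fin l → Fin b | occCount w (List.ofFn f) = k}
      ≤ #(({g : Fin (l / w.length) → Fin w.length → Fin b | #{j | g j = w.get} ≤ k} : Finset _)
          ×ˢ (univ : Finset (Fin (l % w.length) → Fin b))) := by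
        refine card_le_card_of_injOn (blocksEquiv (Fin b) w.length l) (fun f hf => ?_)
          (blocksEquiv (Fin b) w.length l).injective.injOn
        simp only [coe_filter, mem_univ, true_and, Set.mem_ofPred_eq] at hf
        simp only [mem_coe, mem_product, mem_filter, mem_univ, true_and, and_true]
        exact hf ▸ card_filter_blocks_eq_le_occCount w f
    _ = _ := by simp [card_product]

theorem Nw_le (b : ℕ) (hb : 1 < b) (w : List (Fin b)) (hw : 0 < w.length) (k l : ℕ) :
    Nw b w k l ≤ (l + k).choose k * (b ^ w.length - 1) ^ (l / w.length) * b ^ w.length := by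
  have : Nontrivial (Fin w.length → Fin b) := by
    rw [← Fintype.one_lt_card_iff_nontrivial]
    simpa using Nat.one_lt_pow hw.ne' hb
  calc Nw b w k l
      ≤ #{g : Fin (l / w.length) → Fin w.length → Fin b | #{j | g j = w.get} ≤ k} *
          b ^ (l % w.length) := Nw_le_card_filter_mul b w k l
    _ ≤ #{T : Finset (Fin (l / w.length)) | #T ≤ k} * (b ^ w.length - 1) ^ (l / w.length) *
          b ^ (l % w.length) := by
        gcongr
        simpa using card_filter_card_fiber_le (ι := Fin (l / w.length)) w.get k
    _ ≤ (l + k).choose k * (b ^ w.length - 1) ^ (l / w.length) * b ^ w.length := by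
        gcongr ?_ * _ * ?_
        · calc _ ≤ (l / w.length + k).choose k := by
                simpa using card_finset_card_le_le_choose (Fin (l / w.length)) k
            _ ≤ (l + k).choose k := Nat.choose_le_choose k (by gcongr; exact Nat.div_le_self l _)
        · exact Nat.pow_le_pow_right (by omega) (Nat.mod_lt l hw).le

theorem summable_mul_pow_of_abs_le_choose_mul_pow {a : ℕ → ℝ} {C ρ x : ℝ} (k : ℕ) (hρ : 0 ≤ ρ)
    (ha : ∀ l, |a l| ≤ C * ((l + k).choose k * ρ ^ l)) (hx : ρ * |x| < 1) :
    Summable fun l => a l * x ^ l := by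
  have hρx : ‖ρ * |x|‖ < 1 := by rwa [Real.norm_of_nonneg (by positivity)]
  refine ((summable_choose_mul_geometric_of_norm_lt_one k hρx).mul_left C).of_norm_bounded
    fun l => ?_
  rw [norm_mul, norm_pow, Real.norm_eq_abs, Real.norm_eq_abs, mul_pow, ← mul_assoc, ← mul_assoc]
  gcongr
  exact (mul_assoc C _ _).symm ▸ ha l

theorem pow_div_le_rpow_inv_pow {r : ℝ} (hr : 1 ≤ r) (p l : ℕ) :
    r ^ (l / p) ≤ (r ^ (p⁻¹ : ℝ)) ^ l := by
  rcases Nat.eq_zero_or_pos p with rfl | hp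
  · simp
  calc r ^ (l / p) = (r ^ (p⁻¹ : ℝ)) ^ (p * (l / p)) := by
        rw [pow_mul, Real.rpow_inv_natCast_pow (by linarith) hp.ne']
    _ ≤ (r ^ (p⁻¹ : ℝ)) ^ l :=
        pow_le_pow_right₀ (Real.one_le_rpow hr (by positivity)) (Nat.mul_div_le l p)

/-- The generating series `Z_w(k)(t) = Σ_l N_w(k,l) t^l` has radius of convergence at
least `(b^p - 1)^{-1/p}`, which is strictly greater than `1/b`. -/
theorem stmt1 (b : ℕ) (hb : 1 < b) (w : List (Fin b)) (hw : 1 ≤ w.length) (k : ℕ) :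
    (1 / (b : ℝ) < ((b : ℝ) ^ w.length - 1) ^ (-(1 : ℝ) / (w.length : ℝ))) ∧
    ∀ x : ℝ, |x| < ((b : ℝ) ^ w.length - 1) ^ (-(1 : ℝ) / (w.length : ℝ)) →
      Summable fun l : ℕ => (Nw b w k l : ℝ) * x ^ l := by
  set p := w.length
  have hbp : 2 ≤ b ^ p := Nat.one_lt_pow (by omega) hb
  set r : ℝ := (b : ℝ) ^ p - 1 with hr
  have hr1 : 1 ≤ r := by rw [hr, le_sub_iff_add_le]; exact_mod_cast hbp
  set ρ : ℝ := r ^ (p⁻¹ : ℝ)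
  have hρ : 0 < ρ := by positivity
  have hradius : r ^ (-(1 : ℝ) / p) = ρ⁻¹ := by
    rw [neg_div, one_div, Real.rpow_neg (by positivity)]
  have hρb : ρ < b := by
    calc ρ < ((b : ℝ) ^ p) ^ (p⁻¹ : ℝ) :=
          Real.rpow_lt_rpow (by positivity) (by linarith) (by positivity)
      _ = b := Real.pow_rpow_inv_natCast (by positivity) (by omega)
  have hNw : ∀ l, |(Nw b w k l : ℝ)| ≤ (b : ℝ) ^ p * ((l + k).choose k * ρ ^ l) := fun l => by
    rw [abs_of_nonneg (Nat.cast_nonneg _)]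
    calc (Nw b w k l : ℝ) ≤ ((l + k).choose k * (b ^ p - 1) ^ (l / p) * b ^ p : ℕ) := by
          exact_mod_cast Nw_le b hb w hw k l
      _ = (b : ℝ) ^ p * ((l + k).choose k * r ^ (l / p)) := by
          push_cast [hr, Nat.cast_sub (by omega : 1 ≤ b ^ p)]; ring
      _ ≤ (b : ℝ) ^ p * ((l + k).choose k * ρ ^ l) := by
          gcongr; exact pow_div_le_rpow_inv_pow hr1 p l
  refine ⟨hradius ▸ one_div (b : ℝ) ▸ inv_strictAnti₀ hρ hρb, fun x hx => ?_⟩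
  refine summable_mul_pow_of_abs_le_choose_mul_pow k hρ.le hNw ?_
  calc ρ * |x| < ρ * ρ⁻¹ := by rw [hradius] at hx; gcongr
    _ = 1 := mul_inv_cancel₀ hρ.ne'
end

section
/- For every k ≥ 0, the number of length-l strings containing exactly k occurrences of w is bounded by Σ_{0≤i≤k} C(q,i)(b^p-1)^{q-i} · b^r, where l = qp + r with 0 ≤ r < p. -/
open scoped BigOperators

/-! Cut a string of length `q * p + r` into `q` aligned blocks of length `p = |w|` and a tail of
length `r`. Every aligned block equal to `w` is an occurrence of `w`, so a string with `k`
occurrences has at most `k` blocks equal to `w`. The blocks and the tail determine the string, and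
exactly `C(q, i) (b^p - 1)^(q - i)` block sequences have precisely `i` blocks equal to `w`. -/

open Finset

section CoordinateCount

variable {ι A : Type*} [Fintype ι] [DecidableEq ι] [Fintype A] [DecidableEq A]

lemma filter_fiber_eq_eq_piFinset (a₀ : A) (s : Finset ι) :
    ({g : ι → A | ({j | g j = a₀} : Finset ι) = s} : Finset (ι → A)) =
      Fintype.piFinset fun j => if j ∈ s then {a₀} else {a₀}ᶜ := by
  ext g
  simp only [mem_filter, mem_univ, true_and, Fintype.mem_piFinset, Finset.ext_iff]
  refine forall_congr' fun j => ?_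
  split_ifs with hj <;> simp [hj]

lemma card_filter_fiber_eq (a₀ : A) (s : Finset ι) :
    #{g : ι → A | ({j | g j = a₀} : Finset ι) = s} =
      (Fintype.card A - 1) ^ (Fintype.card ι - #s) := by
  rw [filter_fiber_eq_eq_piFinset, Fintype.card_piFinset]
  simp only [apply_ite card, card_singleton, card_compl, prod_ite, prod_const_one, one_mul,
    prod_const]
  congr 1
  rw [filter_not, filter_mem_eq_inter, univ_inter, card_sdiff, card_univ, inter_univ]

lemma card_filter_card_fiber_eq (a₀ : A) (i : ℕ) :
    #{g : ι → A | #{j | g j = a₀} = i} =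
      (Fintype.card ι).choose i * (Fintype.card A - 1) ^ (Fintype.card ι - i) := by
  have hmaps : ∀ g ∈ ({g : ι → A | #{j | g j = a₀} = i} : Finset (ι → A)),
      ({j | g j = a₀} : Finset ι) ∈ powersetCard i univ := by
    intro g hg
    simpa using hg
  rw [card_eq_sum_card_fiberwise hmaps, sum_const_nat, card_powersetCard, card_univ]
  intro s hs
  rw [← (mem_powersetCard.1 hs).2, ← card_filter_fiber_eq a₀ s, filter_filter]
  congr 1
  ext g
  simpa only [mem_filter, mem_univ, true_and] using and_iff_right_of_imp (congrArg card)

lemma card_filter_card_fiber_le_s2 (a₀ : A) (k : ℕ) :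
    #{g : ι → A | #{j | g j = a₀} ≤ k} =
      ∑ i ∈ range (k + 1),
        (Fintype.card ι).choose i * (Fintype.card A - 1) ^ (Fintype.card ι - i) := by
  have hmaps : ∀ g ∈ ({g : ι → A | #{j | g j = a₀} ≤ k} : Finset (ι → A)),
      #{j | g j = a₀} ∈ range (k + 1) := by
    intro g hg
    simpa [Nat.lt_succ_iff] using hg
  rw [card_eq_sum_card_fiberwise hmaps]
  refine sum_congr rfl fun i hi => ?_
  rw [← card_filter_card_fiber_eq a₀ i, filter_filter]
  congr 1
  ext g
  simp only [mem_filter, mem_univ, true_and, and_iff_right_iff_imp]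
  rintro rfl
  exact Nat.lt_succ_iff.1 (mem_range.1 hi)

end CoordinateCount

section Blocks

variable {B : Type*} {q p r : ℕ}

def splitBlocks : (Fin (q * p + r) → B) ≃ (Fin q → Fin p → B) × (Fin r → B) :=
  (((finProdFinEquiv.sumCongr (Equiv.refl _)).trans finSumFinEquiv).symm.arrowCongr
      (Equiv.refl B)).trans
    ((Equiv.sumArrowEquivProdArrow _ _ _).trans ((Equiv.curry _ _ _).prodCongr (Equiv.refl _)))

@[simp]
lemma splitBlocks_fst_apply (f : Fin (q * p + r) → B) (j : Fin q) (i : Fin p) :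
    (splitBlocks f).1 j i = f (Fin.castAdd r (finProdFinEquiv (j, i))) := by
  simp [splitBlocks]

lemma List.take_drop_ofFn {n : ℕ} (f : Fin n → B) (s : ℕ) (h : s + p ≤ n) :
    ((List.ofFn f).drop s).take p = List.ofFn fun i : Fin p => f ⟨s + i, by omega⟩ := by
  apply List.ext_getElem <;> simp; omega

lemma card_blocks_eq_le_occCount [DecidableEq B] (hp : 0 < p) (f : Fin (q * p + r) → B)
    (a₀ : Fin p → B) :
    #{j | (splitBlocks f).1 j = a₀} ≤ occCount (List.ofFn a₀) (List.ofFn f) := by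
  -- the list filter in `occCount` is definitionally this `Finset` filter
  change _ ≤ #{i ∈ range (List.ofFn f).length | _}
  refine card_le_card_of_injOn (fun j => p * j) ?_ ?_
  · intro j hj
    simp only [coe_filter, mem_univ, true_and, Set.mem_ofPred_eq] at hj
    have hjq : p * j + p ≤ q * p := by nlinarith [j.isLt]
    simp only [coe_filter, mem_range, List.length_ofFn, Set.mem_ofPred_eq]
    refine ⟨by omega, ?_⟩
    rw [List.take_drop_ofFn f _ (by omega), ← hj]
    congr 1
    funext i
    simp [finProdFinEquiv, add_comm]
  · intro j _ j' _ h
    exact Fin.ext (Nat.eq_of_mul_eq_mul_left hp h)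

end Blocks

lemma Nw_add_le (b q p r k : ℕ) (hp : 0 < p) (a₀ : Fin p → Fin b) :
    Nw b (List.ofFn a₀) k (q * p + r) ≤
      ∑ i ∈ range (k + 1), q.choose i * (b ^ p - 1) ^ (q - i) * b ^ r := by
  calc Nw b (List.ofFn a₀) k (q * p + r)
      ≤ Fintype.card {f : Fin (q * p + r) → Fin b // #{j | (splitBlocks f).1 j = a₀} ≤ k} :=
        Fintype.card_subtype_mono _ _ fun f hf => hf ▸ card_blocks_eq_le_occCount hp f a₀
    _ = Fintype.card
          {x : (Fin q → Fin p → Fin b) × (Fin r → Fin b) // #{j | x.1 j = a₀} ≤ k} :=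
        Fintype.card_congr (splitBlocks.subtypeEquiv fun _ => Iff.rfl)
    _ = #{g : Fin q → Fin p → Fin b | #{j | g j = a₀} ≤ k} * b ^ r := by
        rw [Fintype.card_congr (Equiv.prodSubtypeFstEquivSubtypeProd
          (p := fun g : Fin q → Fin p → Fin b => #{j | g j = a₀} ≤ k)), Fintype.card_prod,
          Fintype.card_subtype, Fintype.card_fun, Fintype.card_fin, Fintype.card_fin]
    _ = _ := by
        rw [card_filter_card_fiber_le_s2, sum_mul]
        simp only [Fintype.card_fin, Fintype.card_fun]

theorem stmt2_general (b : ℕ) (w : List (Fin b)) (hw : 1 ≤ w.length) (k l : ℕ) :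
    Nw b w k l ≤
      ∑ i ∈ Finset.range (k + 1),
        Nat.choose (l / w.length) i * (b ^ w.length - 1) ^ (l / w.length - i) *
          b ^ (l % w.length) := by
  have h := Nw_add_le b (l / w.length) w.length (l % w.length) k hw w.get
  rwa [List.ofFn_get, Nat.div_add_mod'] at h

/-- Writing `l = q·p + r` with `0 ≤ r < p`, the number of length-`l` strings with exactly
`k` occurrences of `w` is at most `Σ_{0≤i≤k} C(q,i) (b^p-1)^{q-i} · b^r`. -/
theorem stmt2 (b : ℕ) (hb : 1 < b) (w : List (Fin b)) (hw : 1 ≤ w.length) (k l : ℕ) :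
    Nw b w k l ≤
      ∑ i ∈ Finset.range (k + 1),
        Nat.choose (l / w.length) i * (b ^ w.length - 1) ^ (l / w.length - i) *
          b ^ (l % w.length) :=
  stmt2_general b w hw k l
end

section
/- For k ≥ 1 and any string s of length p-1, the generating series satisfy Z_w(s,k)(t) = t^{2-p} Z_w(s,0,u)(t) · Z_w(v,k-1)(t), where u and v are the (p-1)-prefix and (p-1)-suffix of w respectively. -/
open scoped BigOperators
open PowerSeries

/-- Number of strings of length `l` over `{0,…,b-1}` with exactly `k` occurrences of `w`,
starting with `x` and ending with `y` (an empty `x` or `y` imposes no constraint). -/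
def Nxy (b : ℕ) (w x y : List (Fin b)) (k l : ℕ) : ℕ :=
  Fintype.card {f : Fin l → Fin b //
    occCount w (List.ofFn f) = k ∧ x <+: List.ofFn f ∧ y <:+ List.ofFn f}

/-- The generating series `Z_w(x,k,y)(t)` as a formal power series over `ℚ`. -/
noncomputable def Zser (b : ℕ) (w x y : List (Fin b)) (k : ℕ) : PowerSeries ℚ :=
  PowerSeries.mk fun l => (Nxy b w x y k l : ℚ)

/-! A string with `k ≥ 1` occurrences of `w` factors uniquely at its leftmost occurrence as
`A ++ w ++ B`, the leftmost condition being that `A ++ w.dropLast` contains no occurrence of `w`;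
the remaining occurrences are exactly those of `w.tail ++ B`. Hence the string corresponds
bijectively to the pair `(A ++ w.dropLast, w.tail ++ B)`, counted by `Z_w(s,0,u)` and
`Z_w(v,k-1)`, whose lengths add up to the length of the string plus `p - 2`. -/

namespace List

variable {α : Type*} {w : List α}

lemma append_dropLast_prefix (A B : List α) : A ++ w.dropLast <+: A ++ w ++ B := by
  simpa using (dropLast_prefix w).trans (prefix_append w B)

lemma infix_of_append_append_eq {A A' B B' : List α} (h : A ++ w ++ B = A' ++ w ++ B')
    (hlt : A.length < A'.length) : w <:+: A' ++ w.dropLast := by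
  have hpre : A ++ w <+: A' ++ w.dropLast :=
    prefix_of_prefix_length_le (h ▸ prefix_append _ _) (append_dropLast_prefix A' B')
      (by simp; omega)
  exact (suffix_append A w).isInfix.trans hpre.isInfix

lemma eq_of_append_append_eq {A A' B B' : List α} (hA : ¬ w <:+: A ++ w.dropLast)
    (hA' : ¬ w <:+: A' ++ w.dropLast) (h : A ++ w ++ B = A' ++ w ++ B') : A = A' ∧ B = B' := by
  have hlen : A.length = A'.length := by
    rcases lt_trichotomy A.length A'.length with hlt | heq | hgt
    · exact absurd (infix_of_append_append_eq h hlt) hA'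
    · exact heq
    · exact absurd (infix_of_append_append_eq h.symm hgt) hA
  rw [append_assoc, append_assoc] at h
  obtain ⟨rfl, hB⟩ := append_inj h hlen
  exact ⟨rfl, append_cancel_left hB⟩

lemma exists_eq_append_append_of_infix (hw : w ≠ []) {L : List α} (h : w <:+: L) :
    ∃ A B, L = A ++ w ++ B ∧ ¬ w <:+: A ++ w.dropLast := by
  induction L with
  | nil => exact absurd (infix_nil.1 h) hw
  | cons a L ih =>
    by_cases hp : w <+: a :: L
    · obtain ⟨B, hB⟩ := hp
      refine ⟨[], B, hB.symm, fun h' => ?_⟩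
      have := h'.length_le
      simp only [nil_append, length_dropLast] at this
      have := length_pos_of_ne_nil hw
      omega
    · obtain ⟨A, B, rfl, hA⟩ := ih ((infix_cons_iff.1 h).resolve_left hp)
      refine ⟨a :: A, B, rfl, fun h' => ?_⟩
      rcases infix_cons_iff.1 h' with h' | h'
      · exact hp (h'.trans (append_dropLast_prefix (a :: A) B))
      · exact hA h'

lemma dropLast_append_drop (w : List α) : w.dropLast ++ w.drop (w.length - 1) = w := by
  rw [dropLast_eq_take, take_append_drop]

end List

def glue {α : Type*} (w Y₁ Y₂ : List α) : List α :=
  Y₁ ++ w.drop (w.length - 1) ++ Y₂.drop (w.length - 1)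

lemma glue_append_dropLast_tail_append {α : Type*} (w A B : List α) :
    glue w (A ++ w.dropLast) (w.tail ++ B) = A ++ w ++ B := by
  rw [glue, List.append_assoc A, List.append_assoc A, List.dropLast_append_drop,
    ← List.length_tail, List.drop_left, List.append_assoc]

section Occurrences

variable {α : Type*} [DecidableEq α] {w : List α}

@[simp]
lemma occCount_nil : occCount w [] = 0 := rfl

lemma occCount_cons (a : α) (X : List α) :
    occCount w (a :: X) = occCount w X + if w <+: a :: X then 1 else 0 := by
  simp only [occCount, List.length_cons, List.range_succ_eq_map, List.filter_cons,
    List.drop_zero, List.filter_map]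
  split_ifs with h₁ h₂ h₂
  · simp [Function.comp_def]
  · exact absurd (List.prefix_iff_eq_take.2 (of_decide_eq_true h₁).symm) h₂
  · exact absurd (decide_eq_true (List.prefix_iff_eq_take.1 h₂).symm) h₁
  · simp [Function.comp_def]

lemma occCount_eq_zero_iff (hw : w ≠ []) {X : List α} : occCount w X = 0 ↔ ¬ w <:+: X := by
  induction X with
  | nil => simpa using hw
  | cons a X ih => by_cases h : w <+: a :: X <;> simp [occCount_cons, List.infix_cons_iff, h, ih]

lemma occCount_append_append {A : List α} (hA : ¬ w <:+: A ++ w.dropLast) (B : List α) :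
    occCount w (A ++ w ++ B) = occCount w (w.tail ++ B) + 1 := by
  induction A with
  | nil =>
    cases w with
    | nil => exact absurd List.nil_infix hA
    | cons c w => simp [occCount_cons]
  | cons a A ih =>
    rw [List.cons_append, List.infix_cons_iff, not_or] at hA
    have hnp : ¬ w <+: a :: (A ++ w ++ B) := fun h => hA.1 <|
      List.prefix_of_prefix_length_le h (List.append_dropLast_prefix (a :: A) B) (by simp; omega)
    rw [List.cons_append, List.cons_append, occCount_cons, if_neg hnp, ih hA.2, add_zero]

lemma glue_injective_of_occCount_eq_zero (hw : w ≠ []) {Y₁ Y₁' Y₂ Y₂' : List α}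
    (h₁ : occCount w Y₁ = 0) (h₁' : occCount w Y₁' = 0) (hu : w.dropLast <:+ Y₁)
    (hu' : w.dropLast <:+ Y₁') (hv : w.tail <+: Y₂) (hv' : w.tail <+: Y₂')
    (h : glue w Y₁ Y₂ = glue w Y₁' Y₂') : Y₁ = Y₁' ∧ Y₂ = Y₂' := by
  obtain ⟨A, rfl⟩ := hu
  obtain ⟨A', rfl⟩ := hu'
  obtain ⟨B, rfl⟩ := hv
  obtain ⟨B', rfl⟩ := hv'
  rw [glue_append_dropLast_tail_append, glue_append_dropLast_tail_append] at h
  obtain ⟨rfl, rfl⟩ := List.eq_of_append_append_eq ((occCount_eq_zero_iff hw).1 h₁)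
    ((occCount_eq_zero_iff hw).1 h₁') h
  exact ⟨rfl, rfl⟩

end Occurrences

open Finset

section Counting

variable {α : Type*} [Fintype α] [DecidableEq α]

variable (α) in
def listsOfLength (l : ℕ) : Finset (List α) :=
  univ.image (List.ofFn : (Fin l → α) → List α)

lemma mem_listsOfLength {l : ℕ} {L : List α} : L ∈ listsOfLength α l ↔ L.length = l := by
  simp only [listsOfLength, mem_image, mem_univ, true_and]
  constructor
  · rintro ⟨f, rfl⟩
    exact List.length_ofFn
  · rintro rfl
    exact ⟨L.get, List.ofFn_get L⟩

def admissible (w x y : List α) (k l : ℕ) : Finset (List α) :=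
  (listsOfLength α l).filter fun L => occCount w L = k ∧ x <+: L ∧ y <:+ L

lemma mem_admissible {w x y L : List α} {k l : ℕ} :
    L ∈ admissible w x y k l ↔ L.length = l ∧ occCount w L = k ∧ x <+: L ∧ y <:+ L := by
  rw [admissible, Finset.mem_filter, mem_listsOfLength]

lemma Nxy_eq_card_admissible (b : ℕ) (w x y : List (Fin b)) (k l : ℕ) :
    Nxy b w x y k l = (admissible w x y k l).card := by
  rw [Nxy, Fintype.card_subtype, admissible, listsOfLength, filter_image,
    card_image_of_injective _ List.ofFn_injective]

lemma glue_mem_admissible {w s Y₁ Y₂ : List α} {k l i j : ℕ} (hw : w ≠ []) (hk : k ≠ 0)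
    (hlij : l + w.length = i + j + 2) (h₁ : Y₁ ∈ admissible w s w.dropLast 0 i)
    (h₂ : Y₂ ∈ admissible w w.tail [] (k - 1) j) : glue w Y₁ Y₂ ∈ admissible w s [] k l := by
  obtain ⟨rfl, hY₁, hsY₁, A, rfl⟩ := mem_admissible.1 h₁
  obtain ⟨rfl, hY₂, ⟨B, rfl⟩, -⟩ := mem_admissible.1 h₂
  have hA : ¬ w <:+: A ++ w.dropLast := (occCount_eq_zero_iff hw).1 hY₁
  rw [glue_append_dropLast_tail_append, mem_admissible]
  refine ⟨?_, ?_, hsY₁.trans (List.append_dropLast_prefix A B), List.nil_suffix⟩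
  · have := List.length_pos_of_ne_nil hw
    simp only [List.length_append, List.length_dropLast, List.length_tail] at hlij ⊢
    omega
  · rw [occCount_append_append hA, hY₂]
    omega

lemma exists_glue_eq_of_mem_admissible {w s L : List α} {k l : ℕ} (hw : w ≠ [])
    (hs : s.length ≤ w.length - 1) (hk : k ≠ 0) (hL : L ∈ admissible w s [] k l) :
    ∃ Y₁ Y₂, Y₁ ∈ admissible w s w.dropLast 0 Y₁.length ∧
      Y₂ ∈ admissible w w.tail [] (k - 1) Y₂.length ∧
      l + w.length = Y₁.length + Y₂.length + 2 ∧ glue w Y₁ Y₂ = L := by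
  obtain ⟨rfl, hL, hsL, -⟩ := mem_admissible.1 hL
  obtain ⟨A, B, rfl, hA⟩ := List.exists_eq_append_append_of_infix hw
    (not_not.1 (mt (occCount_eq_zero_iff hw).2 (hL ▸ hk)))
  rw [occCount_append_append hA] at hL
  refine ⟨A ++ w.dropLast, w.tail ++ B,
    mem_admissible.2 ⟨rfl, (occCount_eq_zero_iff hw).2 hA, ?_, List.suffix_append _ _⟩,
    mem_admissible.2 ⟨rfl, by omega, List.prefix_append _ _, List.nil_suffix⟩, ?_,
    glue_append_dropLast_tail_append w A B⟩
  · exact List.prefix_of_prefix_length_le hsL (List.append_dropLast_prefix A B) (by simp; omega)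
  · have := List.length_pos_of_ne_nil hw
    simp only [List.length_append, List.length_dropLast, List.length_tail]
    omega

theorem card_admissible_eq_sum_antidiagonal {w s : List α} (hw : w ≠ [])
    (hs : s.length ≤ w.length - 1) {k : ℕ} (hk : k ≠ 0) {l m : ℕ}
    (hlm : l + w.length = m + 2) :
    (admissible w s [] k l).card = ∑ ij ∈ antidiagonal m,
      (admissible w s w.dropLast 0 ij.1).card * (admissible w w.tail [] (k - 1) ij.2).card := by
  simp_rw [← card_product]
  rw [← card_sigma]
  symm
  refine card_bij (fun x _ => glue w x.2.1 x.2.2) ?_ ?_ ?_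
  · rintro ⟨⟨i, j⟩, Y₁, Y₂⟩ h
    simp only [mem_sigma, mem_product, HasAntidiagonal.mem_antidiagonal] at h
    exact glue_mem_admissible hw hk (by omega) h.2.1 h.2.2
  · rintro ⟨⟨i, j⟩, Y₁, Y₂⟩ h ⟨⟨i', j'⟩, Y₁', Y₂'⟩ h' heq
    simp only [mem_sigma, mem_product, mem_admissible] at h h'
    obtain ⟨rfl, rfl⟩ := glue_injective_of_occCount_eq_zero hw h.2.1.2.1 h'.2.1.2.1
      h.2.1.2.2.2 h'.2.1.2.2.2 h.2.2.2.2.1 h'.2.2.2.2.1 heq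
    obtain ⟨-, ⟨rfl, -⟩, rfl, -⟩ := h
    obtain ⟨-, ⟨rfl, -⟩, rfl, -⟩ := h'
    rfl
  · intro L hL
    obtain ⟨Y₁, Y₂, h₁, h₂, hlen, rfl⟩ := exists_glue_eq_of_mem_admissible hw hs hk hL
    refine ⟨⟨(Y₁.length, Y₂.length), Y₁, Y₂⟩, mem_sigma.2 ⟨?_, mem_product.2 ⟨h₁, h₂⟩⟩, rfl⟩
    rw [HasAntidiagonal.mem_antidiagonal]
    dsimp only
    omega

lemma admissible_eq_empty_of_length_lt_suffix {w x y : List α} {k l : ℕ} (hl : l < y.length) :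
    admissible w x y k l = ∅ :=
  Finset.eq_empty_of_forall_notMem fun L hL => by
    obtain ⟨rfl, -, -, hyL⟩ := mem_admissible.1 hL
    exact absurd hyL.length_le (by omega)

lemma admissible_eq_empty_of_length_lt {w x y : List α} {k l : ℕ} (hk : k ≠ 0)
    (hl : l < w.length) : admissible w x y k l = ∅ :=
  Finset.eq_empty_of_forall_notMem fun L hL => by
    obtain ⟨rfl, hL, -, -⟩ := mem_admissible.1 hL
    have hw : w ≠ [] := List.ne_nil_of_length_pos (by omega)
    exact hk (hL ▸ (occCount_eq_zero_iff hw).2 fun h => absurd h.length_le (by omega))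

end Counting

theorem stmt4_general (b : ℕ) (w : List (Fin b)) (hw : 1 ≤ w.length)
    (s : List (Fin b)) (hs : s.length = w.length - 1) (k : ℕ) (hk : 1 ≤ k) :
    (X : PowerSeries ℚ) ^ w.length * Zser b w s [] k =
      X ^ 2 * Zser b w s (w.take (w.length - 1)) 0 * Zser b w (w.drop 1) [] (k - 1) := by
  have hw' : w ≠ [] := List.ne_nil_of_length_pos hw
  rw [← List.dropLast_eq_take, List.drop_one, mul_assoc]
  ext n
  rw [coeff_X_pow_mul', coeff_X_pow_mul', coeff_mul]
  simp only [Zser, coeff_mk, Nxy_eq_card_admissible]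
  split_ifs with hpn h2n h2n
  · exact_mod_cast card_admissible_eq_sum_antidiagonal hw' hs.le (by omega) (by omega)
  · rw [admissible_eq_empty_of_length_lt (by omega) (by omega)]
    rfl
  · refine (Finset.sum_eq_zero fun ij hij => ?_).symm
    rw [Finset.HasAntidiagonal.mem_antidiagonal] at hij
    rw [admissible_eq_empty_of_length_lt_suffix (by rw [List.length_dropLast]; omega)]
    simp
  · rfl

/-- `Z_w(s,k) = t^{2-p} Z_w(s,0,u) Z_w(v,k-1)` (stated multiplied through by `t^p`
to avoid negative exponents): `t^p Z_w(s,k) = t^2 Z_w(s,0,u) Z_w(v,k-1)`. -/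
theorem stmt4 (b : ℕ) (hb : 1 < b) (w : List (Fin b)) (hw : 1 ≤ w.length)
    (s : List (Fin b)) (hs : s.length = w.length - 1) (k : ℕ) (hk : 1 ≤ k) :
    (X : PowerSeries ℚ) ^ w.length * Zser b w s [] k =
      X ^ 2 * Zser b w s (w.take (w.length - 1)) 0 * Zser b w (w.drop 1) [] (k - 1) :=
  stmt4_general b w hw s hs k hk
end
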